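/- Fix δ ∈ (0, 1/3] sufficiently small, and define the perturbation function φ on ℝ by φ(t) = t+1 on [−1,0], φ(t) = −t+1 on [0,2], φ(t) = t−3 on [2,3], and φ(t) = 0 otherwise. Then f₂(v) = 1 + δ φ((v − 1/2)/δ) is a probability density on [0,1], and for δ < 1/3 it is Myerson regular: its distribution function F₂ satisfies that (1 − F₂(v))^{−1} is convex on [0,1); equivalently, the function ψ = 2 f₂² + (1 − F₂) f₂′ is nonnegative at every point of [0,1) where f₂ is differentiable. -/

import Mathlib

/-!
Since `(1 - F₂)' = -f₂`, the derivative of `(1 - F₂)⁻¹` is `f₂ / (1 - F₂)²`, and wherever `f₂` is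
differentiable the derivative of the latter is `ψ / (1 - F₂)³`. As `f₂` is continuous and fails to
be differentiable only at the four kinks of `φ`, convexity of `(1 - F₂)⁻¹` follows from `ψ ≥ 0`.
That inequality holds on all of `[0, 1)`: `f₂ ≥ 1 - δ`, `f₂` is `1`-Lipschitz so `f₂' ≥ -1`, and
`0 < 1 - F₂ ≤ 1`, whence `ψ ≥ 2 (1 - δ)² - 1 > 0` for `δ ≤ 1/6`. The total mass is `1` because
`∫ φ = 0` and, for `δ ≤ 1/6`, the support `[1/2 - δ, 1/2 + 3δ]` of the perturbation lies in
`[0, 1]`.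
-/

open Set

/-- The perturbation function `φ`: `t+1` on `[-1,0]`, `-t+1` on `[0,2]`, `t-3` on `[2,3]`,
and `0` elsewhere. -/
noncomputable def pert (t : ℝ) : ℝ :=
  if t ∈ Icc (-1 : ℝ) 0 then t + 1
  else if t ∈ Icc (0 : ℝ) 2 then -t + 1
  else if t ∈ Icc (2 : ℝ) 3 then t - 3
  else 0

/-- The perturbed density `f₂(v) = 1 + δ φ((v - 1/2)/δ)`. -/
noncomputable def fTwo (δ : ℝ) (v : ℝ) : ℝ := 1 + δ * pert ((v - 1 / 2) / δ)

/-- The distribution function of `f₂`: `F₂(v) = ∫₀ᵛ f₂`. -/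
noncomputable def FTwo (δ : ℝ) (v : ℝ) : ℝ := ∫ t in (0 : ℝ)..v, fTwo δ t

open Filter

theorem MonotoneOn.of_inter_Iic_of_inter_Ici {f : ℝ → ℝ} {D : Set ℝ} (hD : D.OrdConnected)
    {a : ℝ} (h₁ : MonotoneOn f (D ∩ Iic a)) (h₂ : MonotoneOn f (D ∩ Ici a)) : MonotoneOn f D := by
  intro x hx y hy hxy
  rcases le_total y a with hya | hay
  · exact h₁ ⟨hx, hxy.trans hya⟩ ⟨hy, hya⟩ hxy
  rcases le_total x a with hxa | hax
  · have ha : a ∈ D := hD.out hx hy ⟨hxa, hay⟩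
    exact (h₁ ⟨hx, hxa⟩ ⟨ha, self_mem_Iic⟩ hxa).trans (h₂ ⟨ha, self_mem_Ici⟩ ⟨hy, hay⟩ hay)
  · exact h₂ ⟨hx, hax⟩ ⟨hy, hax.trans hxy⟩ hxy

theorem monotoneOn_of_deriv_nonneg_off_finite {f : ℝ → ℝ} {D E : Set ℝ} (hD : Convex ℝ D)
    (hE : E.Finite) (hf : ContinuousOn f D) (hf' : DifferentiableOn ℝ f (interior D \ E))
    (hf'_nonneg : ∀ x ∈ interior D \ E, 0 ≤ deriv f x) : MonotoneOn f D := by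
  induction E, hE using Set.Finite.induction_on generalizing D with
  | empty =>
    rw [sdiff_empty] at hf' hf'_nonneg
    exact monotoneOn_of_deriv_nonneg hD hf hf' hf'_nonneg
  | @insert a E _ _ ih =>
    have hsub (I : Set ℝ) (hI : interior I ⊆ {a}ᶜ) :
        interior (D ∩ I) \ E ⊆ interior D \ insert a E := fun x ⟨hx, hxE⟩ ↦ by
        rw [interior_inter] at hx
        exact ⟨hx.1, by rintro (rfl | h); exacts [hI hx.2 rfl, hxE h]⟩
    have piece (I : Set ℝ) (hIc : Convex ℝ I) (hI : interior I ⊆ {a}ᶜ) : MonotoneOn f (D ∩ I) :=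
      ih (hD.inter hIc) (hf.mono inter_subset_left) (hf'.mono (hsub I hI))
        fun x hx ↦ hf'_nonneg x (hsub I hI hx)
    refine MonotoneOn.of_inter_Iic_of_inter_Ici hD.ordConnected
      (piece _ (convex_Iic a) ?_) (piece _ (convex_Ici a) ?_)
    · rw [interior_Iic]; exact fun x hx ↦ hx.ne
    · rw [interior_Ici]; exact fun x hx ↦ hx.ne'

theorem convexOn_inv_of_two_mul_sq_add_mul_deriv_nonneg {D E : Set ℝ} (hD : Convex ℝ D)
    (hE : E.Finite) {f G : ℝ → ℝ} (hG : ∀ x ∈ D, HasDerivAt G (-f x) x)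
    (hG_pos : ∀ x ∈ D, 0 < G x) (hf : ContinuousOn f D)
    (hf' : ∀ x ∈ interior D \ E, DifferentiableAt ℝ f x)
    (hψ : ∀ x ∈ interior D \ E, 0 ≤ 2 * f x ^ 2 + G x * deriv f x) :
    ConvexOn ℝ D fun x ↦ (G x)⁻¹ := by
  have hG_cont : ContinuousOn G D := fun x hx ↦ (hG x hx).continuousAt.continuousWithinAt
  have hinv (x : ℝ) (hx : x ∈ D) : HasDerivAt (fun y ↦ (G y)⁻¹) (f x / G x ^ 2) x := by
    simpa only [neg_neg] using (hG x hx).fun_inv (hG_pos x hx).ne'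
  have hQ (x : ℝ) (hx : x ∈ interior D \ E) : HasDerivAt (fun y ↦ f y / G y ^ 2)
      ((2 * f x ^ 2 + G x * deriv f x) / G x ^ 3) x := by
    have hGx := (hG_pos x (interior_subset hx.1)).ne'
    refine ((hf' x hx).hasDerivAt.fun_div ((hG x (interior_subset hx.1)).fun_pow 2)
      (pow_ne_zero 2 hGx)).congr_deriv ?_
    field_simp
    ring
  have hQ_mono : MonotoneOn (fun y ↦ f y / G y ^ 2) (interior D) := by
    refine monotoneOn_of_deriv_nonneg_off_finite hD.interior hE ?_ ?_ ?_
    · exact (hf.div (hG_cont.pow 2) fun x hx ↦ pow_ne_zero 2 (hG_pos x hx).ne').mono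
        interior_subset
    · exact fun x hx ↦ (hQ x ⟨interior_subset hx.1, hx.2⟩).differentiableAt.differentiableWithinAt
    · intro x hx
      have hx' : x ∈ interior D \ E := ⟨interior_subset hx.1, hx.2⟩
      rw [(hQ x hx').deriv]
      exact div_nonneg (hψ x hx') (pow_nonneg (hG_pos x (interior_subset hx'.1)).le 3)
  exact MonotoneOn.convexOn_of_deriv (f := fun x ↦ (G x)⁻¹) hD
    (hG_cont.inv₀ fun x hx ↦ (hG_pos x hx).ne')
    (fun x hx ↦ (hinv x (interior_subset hx)).differentiableAt.differentiableWithinAt)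
    (hQ_mono.congr fun x hx ↦ ((hinv x (interior_subset hx)).deriv).symm)

theorem pert_of_le_neg_one {t : ℝ} (ht : t ≤ -1) : pert t = 0 := by
  simp only [pert, mem_Icc]; split_ifs <;> grind

theorem pert_of_mem_Icc_neg_one_zero {t : ℝ} (ht : t ∈ Icc (-1 : ℝ) 0) : pert t = t + 1 := by
  rw [pert, if_pos ht]

theorem pert_of_mem_Icc_zero_two {t : ℝ} (ht : t ∈ Icc (0 : ℝ) 2) : pert t = 1 - t := by
  simp only [pert, mem_Icc] at ht ⊢; split_ifs <;> grind

theorem pert_of_mem_Icc_two_three {t : ℝ} (ht : t ∈ Icc (2 : ℝ) 3) : pert t = t - 3 := by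
  simp only [pert, mem_Icc] at ht ⊢; split_ifs <;> grind

theorem pert_of_three_le {t : ℝ} (ht : 3 ≤ t) : pert t = 0 := by
  simp only [pert, mem_Icc]; split_ifs <;> grind

theorem pert_eq_max_min (t : ℝ) :
    pert t =
      max (min (max (-1) (min t 3) + 1) (1 - max (-1) (min t 3))) (max (-1) (min t 3) - 3) := by
  simp only [pert, mem_Icc]; split_ifs <;> grind

theorem neg_one_le_pert (t : ℝ) : -1 ≤ pert t := by
  simp only [pert, mem_Icc]; split_ifs <;> grind

theorem lipschitzWith_pert : LipschitzWith 1 pert := by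
  have hclamp : LipschitzWith 1 fun t : ℝ ↦ max (-1) (min t 3) :=
    (LipschitzWith.id.min_const 3).const_max (-1)
  have hcore : LipschitzWith 1 fun s : ℝ ↦ max (min (s + 1) (1 - s)) (s - 3) := by
    simpa using ((IsometryEquiv.addRight (1 : ℝ)).isometry.lipschitz.min
      (IsometryEquiv.subLeft (1 : ℝ)).isometry.lipschitz).max
      (IsometryEquiv.subRight (3 : ℝ)).isometry.lipschitz
  rw [funext pert_eq_max_min]
  simpa only [mul_one, Function.comp_def] using hcore.comp hclamp

theorem differentiableAt_pert {t : ℝ} (ht : t ∉ ({-1, 0, 2, 3} : Set ℝ)) :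
    DifferentiableAt ℝ pert t := by
  have piece {a b : ℝ} {g : ℝ → ℝ} (hg : Differentiable ℝ g) (hab : t ∈ Ioo a b)
      (h : EqOn pert g (Icc a b)) : DifferentiableAt ℝ pert t :=
    (hg t).congr_of_eventuallyEq
      (eventuallyEq_of_mem (Ioo_mem_nhds hab.1 hab.2) (h.mono Ioo_subset_Icc_self))
  simp only [mem_insert_iff, mem_singleton_iff, not_or] at ht
  obtain ⟨h₁, h₂, h₃, h₄⟩ := ht
  rcases lt_or_gt_of_ne h₁ with h₁ | h₁
  · exact piece (differentiable_const 0) ⟨sub_one_lt t, h₁⟩ fun s hs ↦ pert_of_le_neg_one hs.2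
  rcases lt_or_gt_of_ne h₂ with h₂ | h₂
  · exact piece (by fun_prop) ⟨h₁, h₂⟩ fun s ↦ pert_of_mem_Icc_neg_one_zero
  rcases lt_or_gt_of_ne h₃ with h₃ | h₃
  · exact piece (by fun_prop) ⟨h₂, h₃⟩ fun s ↦ pert_of_mem_Icc_zero_two
  rcases lt_or_gt_of_ne h₄ with h₄ | h₄
  · exact piece (by fun_prop) ⟨h₃, h₄⟩ fun s ↦ pert_of_mem_Icc_two_three
  · exact piece (differentiable_const 0) ⟨h₄, lt_add_one t⟩ fun s hs ↦ pert_of_three_le hs.1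

theorem integral_pert_eq_zero {a b : ℝ} (ha : a ≤ -1) (hb : 3 ≤ b) : ∫ t in a..b, pert t = 0 := by
  have hint (c d : ℝ) : IntervalIntegrable pert MeasureTheory.volume c d :=
    lipschitzWith_pert.continuous.intervalIntegrable c d
  have piece {c d : ℝ} (g : ℝ → ℝ) (hcd : c ≤ d) (h : EqOn pert g (Icc c d)) :
      ∫ t in c..d, pert t = ∫ t in c..d, g t :=
    intervalIntegral.integral_congr (by rwa [uIcc_of_le hcd])
  rw [← intervalIntegral.integral_add_adjacent_intervals (hint a (-1)) (hint (-1) b),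
    ← intervalIntegral.integral_add_adjacent_intervals (hint (-1) 0) (hint 0 b),
    ← intervalIntegral.integral_add_adjacent_intervals (hint 0 2) (hint 2 b),
    ← intervalIntegral.integral_add_adjacent_intervals (hint 2 3) (hint 3 b),
    piece (fun _ ↦ 0) ha fun t ht ↦ pert_of_le_neg_one ht.2,
    piece (· + 1) (by norm_num) fun t ↦ pert_of_mem_Icc_neg_one_zero,
    piece (1 - ·) (by norm_num) fun t ↦ pert_of_mem_Icc_zero_two,
    piece (· - 3) (by norm_num) fun t ↦ pert_of_mem_Icc_two_three,
    piece (fun _ ↦ 0) hb fun t ht ↦ pert_of_three_le ht.1]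
  norm_num [intervalIntegral.integral_comp_add_right, intervalIntegral.integral_comp_sub_right,
    intervalIntegral.integral_sub intervalIntegrable_const intervalIntegral.intervalIntegrable_id]

section fTwo

variable {δ : ℝ}

theorem lipschitzWith_fTwo (hδ : 0 < δ) : LipschitzWith 1 (fTwo δ) := by
  refine LipschitzWith.of_dist_le_mul fun x y ↦ ?_
  have h := lipschitzWith_pert.dist_le_mul ((x - 1 / 2) / δ) ((y - 1 / 2) / δ)
  simp only [Real.dist_eq, NNReal.coe_one, one_mul] at h ⊢
  calc |fTwo δ x - fTwo δ y| = δ * |pert ((x - 1 / 2) / δ) - pert ((y - 1 / 2) / δ)| := by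
        rw [fTwo, fTwo, add_sub_add_left_eq_sub, ← mul_sub, abs_mul, abs_of_pos hδ]
    _ ≤ δ * |(x - 1 / 2) / δ - (y - 1 / 2) / δ| := by gcongr
    _ = |x - y| := by
        rw [div_sub_div_same, sub_sub_sub_cancel_right, abs_div, abs_of_pos hδ]
        field_simp

theorem continuous_fTwo (hδ : 0 < δ) : Continuous (fTwo δ) := (lipschitzWith_fTwo hδ).continuous

theorem one_sub_le_fTwo (hδ : 0 < δ) (v : ℝ) : 1 - δ ≤ fTwo δ v := by
  have := neg_one_le_pert ((v - 1 / 2) / δ)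
  rw [fTwo]
  nlinarith

theorem neg_one_le_deriv_fTwo (hδ : 0 < δ) (v : ℝ) : -1 ≤ deriv (fTwo δ) v := by
  have h := norm_deriv_le_of_lipschitz (𝕜 := ℝ) (x₀ := v) (lipschitzWith_fTwo hδ)
  exact (abs_le.1 (by simpa using h)).1

theorem differentiableAt_fTwo {v : ℝ} (hv : (v - 1 / 2) / δ ∉ ({-1, 0, 2, 3} : Set ℝ)) :
    DifferentiableAt ℝ (fTwo δ) v :=
  (differentiableAt_const _).add <| (differentiableAt_const δ).mul <|
    (differentiableAt_pert hv).comp (f := fun v ↦ (v - 1 / 2) / δ) v (by fun_prop)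

theorem hasDerivAt_FTwo (hδ : 0 < δ) (v : ℝ) : HasDerivAt (FTwo δ) (fTwo δ v) v :=
  intervalIntegral.integral_hasDerivAt_right ((continuous_fTwo hδ).intervalIntegrable 0 v)
    ((continuous_fTwo hδ).stronglyMeasurableAtFilter _ _) (continuous_fTwo hδ).continuousAt

theorem integral_fTwo (hδ : 0 < δ) (a b : ℝ) :
    ∫ v in a..b, fTwo δ v = b - a + δ ^ 2 * ∫ t in (a - 1 / 2) / δ..(b - 1 / 2) / δ, pert t := by
  have hpert : IntervalIntegrable (fun v ↦ δ * pert ((v - 1 / 2) / δ)) MeasureTheory.volume a b :=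
    (continuous_const.mul (lipschitzWith_pert.continuous.comp (by fun_prop))).intervalIntegrable a b
  simp only [fTwo]
  rw [intervalIntegral.integral_add intervalIntegrable_const hpert, intervalIntegral.integral_const,
    intervalIntegral.integral_const_mul,
    intervalIntegral.integral_comp_sub_right (fun u ↦ pert (u / δ)),
    intervalIntegral.integral_comp_div pert hδ.ne', smul_eq_mul, smul_eq_mul]
  ring

variable (hδ : 0 < δ) (hδ' : δ ≤ 1 / 6)
include hδ hδ'

theorem integral_fTwo_zero_one : ∫ v in (0 : ℝ)..1, fTwo δ v = 1 := by
  rw [integral_fTwo hδ, integral_pert_eq_zero]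
  · ring
  · rw [div_le_iff₀ hδ]; linarith
  · rw [le_div_iff₀ hδ]; linarith

theorem one_sub_FTwo_pos {v : ℝ} (hv : v < 1) : 0 < 1 - FTwo δ v := by
  rw [FTwo, ← integral_fTwo_zero_one hδ hδ', intervalIntegral.integral_interval_sub_left
    ((continuous_fTwo hδ).intervalIntegrable _ _) ((continuous_fTwo hδ).intervalIntegrable _ _)]
  exact intervalIntegral.intervalIntegral_pos_of_pos_on
    ((continuous_fTwo hδ).intervalIntegrable _ _) (fun u _ ↦ by linarith [one_sub_le_fTwo hδ u]) hv

theorem one_sub_FTwo_le_one {v : ℝ} (hv : 0 ≤ v) : 1 - FTwo δ v ≤ 1 := by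
  have : 0 ≤ FTwo δ v :=
    intervalIntegral.integral_nonneg hv fun u _ ↦ by linarith [one_sub_le_fTwo hδ u]
  linarith

theorem two_mul_fTwo_sq_add_mul_deriv_nonneg {v : ℝ} (hv : v ∈ Ico (0 : ℝ) 1) :
    0 ≤ 2 * fTwo δ v ^ 2 + (1 - FTwo δ v) * deriv (fTwo δ) v := by
  have hf := one_sub_le_fTwo hδ v
  have hG₀ := one_sub_FTwo_pos hδ hδ' hv.2
  have hG₁ := one_sub_FTwo_le_one hδ hδ' hv.1
  have hc := neg_one_le_deriv_fTwo hδ v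
  nlinarith [mul_le_mul_of_nonneg_left hc hG₀.le]

theorem convexOn_inv_one_sub_FTwo : ConvexOn ℝ (Ico 0 1) fun v ↦ (1 - FTwo δ v)⁻¹ := by
  have hinj : Function.Injective fun v : ℝ ↦ (v - 1 / 2) / δ := fun x y h ↦ by
    simpa [hδ.ne'] using h
  refine convexOn_inv_of_two_mul_sq_add_mul_deriv_nonneg (convex_Ico 0 1)
    ((Set.toFinite ({-1, 0, 2, 3} : Set ℝ)).preimage hinj.injOn)
    (fun v _ ↦ (hasDerivAt_FTwo hδ v).const_sub 1) (fun v hv ↦ one_sub_FTwo_pos hδ hδ' hv.2)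
    (continuous_fTwo hδ).continuousOn (fun v hv ↦ differentiableAt_fTwo hv.2)
    (fun v hv ↦ two_mul_fTwo_sq_add_mul_deriv_nonneg hδ hδ' (interior_subset hv.1))

end fTwo

/-- for all sufficiently small `δ ∈ (0, 1/3]`, the perturbed function `f₂` is a
probability density on `[0,1]`, and for `δ < 1/3` it is Myerson regular: `(1 - F₂)⁻¹` is convex
on `[0,1)`; equivalently, `ψ = 2 f₂² + (1 - F₂) f₂′` is nonnegative at every point of `[0,1)`
where `f₂` is differentiable. -/
theorem stmt16_perturbed_density_regular :
    ∃ δ₀ > (0 : ℝ), δ₀ ≤ 1 / 3 ∧ ∀ δ : ℝ, 0 < δ → δ ≤ δ₀ →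
      ((∀ v ∈ Icc (0 : ℝ) 1, 0 ≤ fTwo δ v) ∧
        (∫ v in (0 : ℝ)..1, fTwo δ v) = 1) ∧
      (δ < 1 / 3 →
        ConvexOn ℝ (Ico (0 : ℝ) 1) (fun v => (1 - FTwo δ v)⁻¹) ∧
        ∀ v ∈ Ico (0 : ℝ) 1, DifferentiableAt ℝ (fTwo δ) v →
          0 ≤ 2 * fTwo δ v ^ 2 + (1 - FTwo δ v) * deriv (fTwo δ) v) := by
  refine ⟨1 / 6, by norm_num, by norm_num, fun δ hδ hδ' ↦ ⟨⟨?_, ?_⟩, fun _ ↦ ⟨?_, ?_⟩⟩⟩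
  · exact fun v _ ↦ (by linarith : (0 : ℝ) ≤ 1 - δ).trans (one_sub_le_fTwo hδ v)
  · exact integral_fTwo_zero_one hδ hδ'
  · exact convexOn_inv_one_sub_FTwo hδ hδ'
  · exact fun v hv _ ↦ two_mul_fTwo_sq_add_mul_deriv_nonneg hδ hδ' hv
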